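/- arXiv:1203.2704 — 6 statements merged into one kernel-verified Lean document; each statement's English description precedes it below -/
import Mathlib

section
/- Any two topological orderings of a finite DAG are connected by a sequence of swaps of adjacent vertices, where each swap exchanges two adjacent vertices with no edge between them and each intermediate sequence is itself a topological ordering. -/
/-!
Both orderings list the same vertices. Bubble the first vertex `a` of the target ordering to the
front of the source ordering: every vertex `v` it passes precedes `a` in the source and follows
it in the target, so neither `E v a` nor `E a v` holds, and each of these swaps is allowed and
keeps the list a topological ordering. Then recurse on the remaining suffixes.
-/

/-- `l` is a topological ordering of the directed graph `E`. -/
def IsTopoOrdering {V : Type*} (E : V → V → Prop) (l : List V) : Prop :=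
  l.Nodup ∧ (∀ v : V, v ∈ l) ∧
    ∀ (i j : ℕ) (hi : i < l.length) (hj : j < l.length),
      E (l.get ⟨i, hi⟩) (l.get ⟨j, hj⟩) → i < j

/-- `l₂` is obtained from `l₁` by swapping two adjacent vertices that have
no edge between them in either direction. -/
def AdjSwap {V : Type*} (E : V → V → Prop) (l₁ l₂ : List V) : Prop :=
  ∃ (xs ys : List V) (a b : V),
    l₁ = xs ++ a :: b :: ys ∧ l₂ = xs ++ b :: a :: ys ∧ ¬ E a b ∧ ¬ E b a

section

variable {V : Type*} {E : V → V → Prop}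

def TopoSwap (E : V → V → Prop) (l₁ l₂ : List V) : Prop :=
  AdjSwap E l₁ l₂ ∧ IsTopoOrdering E l₂

theorem isTopoOrdering_iff {l : List V} :
    IsTopoOrdering E l ↔
      l.Nodup ∧ (∀ v, v ∈ l) ∧ (∀ v, ¬ E v v) ∧ l.Pairwise (fun a b => ¬ E b a) := by
  constructor
  · rintro ⟨hnodup, hmem, hlt⟩
    refine ⟨hnodup, hmem, fun v hv => ?_, List.pairwise_iff_get.mpr fun i j hij hji => ?_⟩
    · obtain ⟨i, rfl⟩ := List.get_of_mem (hmem v)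
      exact lt_irrefl _ (hlt i i i.isLt i.isLt hv)
    · exact lt_asymm hij (hlt j i j.isLt i.isLt hji)
  · rintro ⟨hnodup, hmem, hirr, hpw⟩
    refine ⟨hnodup, hmem, fun i j hi hj hij => ?_⟩
    rcases lt_trichotomy i j with hlt | rfl | hgt
    · exact hlt
    · exact absurd hij (hirr _)
    · exact absurd hij (List.pairwise_iff_get.mp hpw ⟨j, hj⟩ ⟨i, hi⟩ hgt)

namespace IsTopoOrdering

theorem pairwise {l : List V} (h : IsTopoOrdering E l) : l.Pairwise (fun a b => ¬ E b a) :=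
  (isTopoOrdering_iff.mp h).2.2.2

theorem perm {l₁ l₂ : List V} (h₁ : IsTopoOrdering E l₁) (h₂ : IsTopoOrdering E l₂) :
    l₁.Perm l₂ :=
  (List.perm_ext_iff_of_nodup h₁.1 h₂.1).mpr fun v => iff_of_true (h₁.2.1 v) (h₂.2.1 v)

theorem swap {xs ys : List V} {a b : V} (h : IsTopoOrdering E (xs ++ a :: b :: ys))
    (hab : ¬ E a b) : IsTopoOrdering E (xs ++ b :: a :: ys) := by
  obtain ⟨hnodup, hmem, hirr, hpw⟩ := isTopoOrdering_iff.mp h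
  have hperm : (xs ++ a :: b :: ys).Perm (xs ++ b :: a :: ys) :=
    (List.Perm.swap b a ys).append_left xs
  refine isTopoOrdering_iff.mpr
    ⟨hperm.nodup_iff.mp hnodup, fun v => hperm.mem_iff.mp (hmem v), hirr, ?_⟩
  simp only [List.pairwise_append, List.pairwise_cons, List.mem_cons] at hpw ⊢
  grind

end IsTopoOrdering

theorem TopoSwap.of_not_adj {xs ys : List V} {a b : V}
    (h : IsTopoOrdering E (xs ++ a :: b :: ys)) (hab : ¬ E a b) (hba : ¬ E b a) :
    TopoSwap E (xs ++ a :: b :: ys) (xs ++ b :: a :: ys) :=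
  ⟨⟨xs, ys, a, b, rfl, rfl, hab, hba⟩, h.swap hab⟩

theorem IsTopoOrdering.of_reflTransGen {l₁ l₂ : List V}
    (hsteps : Relation.ReflTransGen (TopoSwap E) l₁ l₂) (h₁ : IsTopoOrdering E l₁) :
    IsTopoOrdering E l₂ := by
  induction hsteps with
  | refl => exact h₁
  | tail _ hstep _ => exact hstep.2

theorem reflTransGen_topoSwap_bubble (a : V) (xs : List V) {pre ys : List V}
    (hxs : ∀ v ∈ xs, ¬ E v a ∧ ¬ E a v) (h : IsTopoOrdering E (pre ++ xs ++ a :: ys)) :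
    Relation.ReflTransGen (TopoSwap E) (pre ++ xs ++ a :: ys) (pre ++ a :: (xs ++ ys)) := by
  induction xs generalizing pre with
  | nil => simpa using Relation.ReflTransGen.refl
  | cons b xs ih =>
    obtain ⟨hba, hab⟩ := hxs b List.mem_cons_self
    have hmove : Relation.ReflTransGen (TopoSwap E)
        (pre ++ [b] ++ xs ++ a :: ys) (pre ++ [b] ++ a :: (xs ++ ys)) :=
      ih (fun v hv => hxs v (List.mem_cons_of_mem b hv)) (by simpa using h)
    have hswap : TopoSwap E (pre ++ b :: a :: (xs ++ ys)) (pre ++ a :: b :: (xs ++ ys)) :=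
      .of_not_adj (by simpa using IsTopoOrdering.of_reflTransGen hmove (by simpa using h))
        hba hab
    simpa using hmove.tail (by simpa using hswap)

theorem reflTransGen_topoSwap_of_perm (pre : List V) {l₁ l₂ : List V} (hperm : l₁.Perm l₂)
    (h₁ : IsTopoOrdering E (pre ++ l₁)) (h₂ : IsTopoOrdering E (pre ++ l₂)) :
    Relation.ReflTransGen (TopoSwap E) (pre ++ l₁) (pre ++ l₂) := by
  induction l₂ generalizing pre l₁ with
  | nil => rw [List.perm_nil.mp hperm]
  | cons a t₂ ih =>
    obtain ⟨xs, ys, rfl⟩ := List.append_of_mem (hperm.mem_iff.mpr List.mem_cons_self)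
    have hrest : (xs ++ ys).Perm t₂ := (List.perm_middle.symm.trans hperm).cons_inv
    have hxs : ∀ v ∈ xs, ¬ E v a ∧ ¬ E a v := by
      intro v hv
      have hv₂ : v ∈ t₂ := hrest.mem_iff.mp (List.mem_append_left ys hv)
      have hpw₁ := h₁.pairwise
      have hpw₂ := h₂.pairwise
      simp only [List.pairwise_append, List.pairwise_cons, List.mem_cons] at hpw₁ hpw₂
      exact ⟨hpw₂.2.1.1 v hv₂, hpw₁.2.1.2.2 v hv a (.inl rfl)⟩
    have hbubble := reflTransGen_topoSwap_bubble a xs hxs (by simpa using h₁)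
    have hmid : IsTopoOrdering E (pre ++ [a] ++ (xs ++ ys)) := by
      simpa using IsTopoOrdering.of_reflTransGen hbubble (by simpa using h₁)
    have htail := ih (pre ++ [a]) hrest hmid (by simpa using h₂)
    simpa using hbubble.trans (by simpa using htail)

end

theorem topo_orderings_connected_by_swaps_general {V : Type*}
    (E : V → V → Prop)
    (l₁ l₂ : List V) (h₁ : IsTopoOrdering E l₁) (h₂ : IsTopoOrdering E l₂) :
    Relation.ReflTransGen (fun m₁ m₂ => AdjSwap E m₁ m₂ ∧ IsTopoOrdering E m₂) l₁ l₂ :=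
  reflTransGen_topoSwap_of_perm [] (h₁.perm h₂) h₁ h₂

/-- Any two topological orderings of a finite DAG are connected by a sequence
of swaps of adjacent non-adjacent-in-`E` vertices, each intermediate list being
itself a topological ordering. -/
theorem topo_orderings_connected_by_swaps {V : Type*} [Fintype V]
    (E : V → V → Prop) (hacyc : ∀ v, ¬ Relation.TransGen E v v)
    (l₁ l₂ : List V) (h₁ : IsTopoOrdering E l₁) (h₂ : IsTopoOrdering E l₂) :
    Relation.ReflTransGen (fun m₁ m₂ => AdjSwap E m₁ m₂ ∧ IsTopoOrdering E m₂) l₁ l₂ :=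
  topo_orderings_connected_by_swaps_general E l₁ l₂ h₁ h₂
end

section
/- If two tasks in a build's access sequence are interleaved (neither performs all its accesses before all accesses of the other), and the build is valid, then the two tasks do not conflict. -/
/-- A single access in a build's access sequence: a task `task` reads
(`isWrite = false`) or writes (`isWrite = true`) the value `val` of
resource `res`. -/
structure Access (T R V : Type*) where
  task : T
  res : R
  isWrite : Bool
  val : V

/-- Tasks `t₁` and `t₂` conflict during the access sequence `tr`:
one of them writes a resource that the other reads or writes. -/
def Conflict {T R V : Type*} (tr : List (Access T R V)) (t₁ t₂ : T) : Prop :=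
  t₁ ≠ t₂ ∧ ∃ a ∈ tr, ∃ b ∈ tr, a.task = t₁ ∧ b.task = t₂ ∧ a.res = b.res ∧
    (a.isWrite = true ∨ b.isWrite = true)

/-- The access sequence is valid w.r.t. the dependency graph `D`: every pair of
conflicting tasks is connected by a directed path in `D`. -/
def ValidSeq {T R V : Type*} (D : T → T → Prop) (tr : List (Access T R V)) : Prop :=
  ∀ t₁ t₂, Conflict tr t₁ t₂ →
    Relation.TransGen D t₁ t₂ ∨ Relation.TransGen D t₂ t₁

/-- All accesses of `f` precede all accesses of `g` in `tr`. -/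
def AllBefore {T R V : Type*} (tr : List (Access T R V)) (f g : T) : Prop :=
  ∀ (i j : ℕ) (hi : i < tr.length) (hj : j < tr.length),
    (tr.get ⟨i, hi⟩).task = f → (tr.get ⟨j, hj⟩).task = g → i < j

/-- The access sequence respects the dependency DAG: if `g` depends (directly or
transitively) on `f`, then all accesses of `f` precede all accesses of `g`. -/
def RespectsDAG {T R V : Type*} (D : T → T → Prop) (tr : List (Access T R V)) : Prop :=
  ∀ f g, Relation.TransGen D f g → AllBefore tr f g

/-- If two tasks are interleaved in a valid, DAG-respecting build, they do not
conflict. -/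
theorem interleaved_tasks_do_not_conflict {T R V : Type*}
    (D : T → T → Prop) (tr : List (Access T R V))
    (hresp : RespectsDAG D tr) (hvalid : ValidSeq D tr) (t₁ t₂ : T)
    (hinter : ¬ AllBefore tr t₁ t₂ ∧ ¬ AllBefore tr t₂ t₁) :
    ¬ Conflict tr t₁ t₂ := by
  intro hc
  rcases hvalid t₁ t₂ hc with h | h
  · exact hinter.1 (hresp t₁ t₂ h)
  · exact hinter.2 (hresp t₂ t₁ h)
end

section
/- Swapping two adjacent accesses in an access sequence that belong to different tasks and access different resources (or both only read the same resource) yields a sequence that produces the same final shared state. -/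
/-- The effect of one access on the shared state: a write to `r` with value `v`
updates the state at `r` and leaves all other resources unchanged; a read does
not change the state. -/
def applyAccess {T R V : Type*} [DecidableEq R] (s : R → V) (a : Access T R V) : R → V :=
  if a.isWrite then Function.update s a.res a.val else s

/-- The final shared state after performing an access sequence in order from
the initial state `s`. -/
def finalState {T R V : Type*} [DecidableEq R] (s : R → V) (tr : List (Access T R V)) : R → V :=
  tr.foldl applyAccess s

lemma applyAccess_comm {T R V : Type*} [DecidableEq R] (s : R → V) (a b : Access T R V)
    (hnc : a.res ≠ b.res ∨ (a.isWrite = false ∧ b.isWrite = false)) :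
    applyAccess (applyAccess s a) b = applyAccess (applyAccess s b) a := by
  rcases hnc with h | ⟨ha, hb⟩
  · unfold applyAccess
    rcases ha : a.isWrite <;> rcases hb : b.isWrite <;> simp
    exact Function.update_comm h _ _ _
  · simp [applyAccess, ha, hb]

/-- Swapping two adjacent accesses belonging to different tasks that are
non-conflicting (they access different resources, or both are reads) yields an
access sequence producing the same final shared state. -/
theorem swap_adjacent_accesses_same_final_state {T R V : Type*} [DecidableEq R]
    (xs ys : List (Access T R V)) (a b : Access T R V)
    (htask : a.task ≠ b.task)
    (hnc : a.res ≠ b.res ∨ (a.isWrite = false ∧ b.isWrite = false))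
    (s : R → V) :
    finalState s (xs ++ a :: b :: ys) = finalState s (xs ++ b :: a :: ys) := by
  simp only [finalState, List.foldl_append, List.foldl_cons]
  rw [applyAccess_comm _ _ _ hnc]
end

section
/- Contracting a set of resources into a single merged resource preserves validity only in one direction: any build valid with respect to the contracted resource space is valid with respect to the original resource space, but not conversely. -/
/-- Tasks `t₁` and `t₂` conflict: they are distinct and one of them writes a
resource that the other reads or writes.  `Rd t` and `W t` are the sets of
resources read resp. written by task `t`. -/
def Conflicts {T R : Type*} (Rd W : T → Set R) (t₁ t₂ : T) : Prop :=
  t₁ ≠ t₂ ∧ ∃ r, (r ∈ W t₁ ∧ (r ∈ Rd t₂ ∨ r ∈ W t₂)) ∨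
                 (r ∈ W t₂ ∧ (r ∈ Rd t₁ ∨ r ∈ W t₁))

/-- The build is valid w.r.t. the dependency graph `D`: every pair of
conflicting tasks is connected by a directed path in `D`. -/
def Valid {T R : Type*} (Rd W : T → Set R) (D : T → T → Prop) : Prop :=
  ∀ t₁ t₂, Conflicts Rd W t₁ t₂ →
    Relation.TransGen D t₁ t₂ ∨ Relation.TransGen D t₂ t₁

open Classical in
/-- The contraction map: all resources in `A` are merged into the single
resource `a` (a chosen element of `A`); resources outside `A` are unchanged. -/
noncomputable def contractMap {R : Type*} (A : Set R) (a : R) : R → R :=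
  fun r => if r ∈ A then a else r

/-- Contracting a set of resources into a single merged resource preserves
validity in one direction only: any build valid with respect to the contracted
resource space is valid with respect to the original resource space, but there
is a build (two tasks writing two distinct resources of `A`, with no path
between them) that is valid in the original space and invalid in the
contracted space. -/
theorem contraction_validity {T R : Type*} :
    -- validity in the contracted space implies validity in the original space
    (∀ (Rd W : T → Set R) (D : T → T → Prop) (A : Set R) (a : R), a ∈ A →
      Valid (fun t => contractMap A a '' Rd t) (fun t => contractMap A a '' W t) D →
      Valid Rd W D) ∧
    -- ... but not conversely
    (∃ (Rd W : Bool → Set Bool) (D : Bool → Bool → Prop) (A : Set Bool) (a : Bool),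
      a ∈ A ∧ Valid Rd W D ∧
      ¬ Valid (fun t => contractMap A a '' Rd t) (fun t => contractMap A a '' W t) D) := by
  constructor
  · intro Rd W D A a _ hV t₁ t₂ ⟨hne, r, hr⟩
    refine hV t₁ t₂ ⟨hne, contractMap A a r, ?_⟩
    rcases hr with ⟨h1, h2⟩ | ⟨h1, h2⟩
    · exact Or.inl ⟨Set.mem_image_of_mem _ h1,
        h2.imp (Set.mem_image_of_mem _) (Set.mem_image_of_mem _)⟩
    · exact Or.inr ⟨Set.mem_image_of_mem _ h1,
        h2.imp (Set.mem_image_of_mem _) (Set.mem_image_of_mem _)⟩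
  · refine ⟨fun _ => ∅, fun t => {t}, fun _ _ => False, Set.univ, true,
      Set.mem_univ _, ?_, ?_⟩
    · intro t₁ t₂ ⟨hne, r, hr⟩
      exfalso
      rcases hr with ⟨h1, h2 | h2⟩ | ⟨h1, h2 | h2⟩ <;>
        simp only [Set.mem_empty_iff_false, Set.mem_singleton_iff] at h1 h2 <;>
        first | exact h2 | exact hne (h1.symm.trans h2) | exact hne (h2.symm.trans h1)
    · intro hV
      have hc : Conflicts (fun t => contractMap Set.univ true '' (∅ : Set Bool))
          (fun t => contractMap Set.univ true '' {t}) false true := by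
        refine ⟨by simp, true, Or.inl ⟨⟨false, rfl, by simp [contractMap]⟩,
          Or.inr ⟨true, rfl, by simp [contractMap]⟩⟩⟩
      rcases hV false true hc with h | h <;>
        cases h with
        | single h => exact h
        | tail _ h => exact h
end

section
/- In the incremental-build model, if a task f does not conflict with the developer task d, then running f on the post-modification state s'_f has no effect on any resource, provided f has no effect on the pre-modification state s_f and d only writes resources it is recorded as writing. -/
/-- In the incremental-build model, if a task `f` does not conflict with the
developer task `d`, `f` has no effect on the pre-modification state `s_f`, and
`d` only modifies resources in its write set, then `f` has no effect on the
post-modification state `s'_f`.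

`Rf, Wf` are the read/write sets of `f`, `Rdd, Wd` those of `d`, and
`F : (R → V) → (R → V)` is the state transformation effected by running `f`:
it only changes resources in `Wf`, and the values it writes depend only on the
values of the resources in `Rf`. -/
theorem no_conflict_incremental_noop {R V : Type*}
    (Rf Wf Rdd Wd : Set R) (F : (R → V) → (R → V)) (sf sf' : R → V)
    -- `f` only writes resources in its write set
    (hframe : ∀ (s : R → V) (r : R), r ∉ Wf → F s r = s r)
    -- `f`'s behaviour depends only on the values of the resources it reads
    (hdet : ∀ s s' : R → V, (∀ r ∈ Rf, s r = s' r) → ∀ r ∈ Wf, F s r = F s' r)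
    -- the developer task `d` transforms `s_f` into `s'_f`, modifying only
    -- resources it is recorded as writing
    (hdev : ∀ r : R, sf r ≠ sf' r → r ∈ Wd)
    -- `f` and `d` do not conflict
    (hnoconf : ¬ ((∃ r ∈ Wf, r ∈ Rdd ∪ Wd) ∨ (∃ r ∈ Wd, r ∈ Rf ∪ Wf)))
    -- `f` has no effect on the pre-modification state
    (hnoop : F sf = sf) :
    -- `f` has no effect on the post-modification state
    F sf' = sf' := by
  push_neg at hnoconf
  obtain ⟨h1, h2⟩ := hnoconf
  funext r
  by_cases hw : r ∈ Wf
  · have hread : ∀ x ∈ Rf, sf x = sf' x := by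
      intro x hx
      by_contra hne
      exact (h2 x (hdev x hne)).elim (Or.inl hx)
    have := hdet sf sf' hread r hw
    rw [← this, congrFun hnoop r]
    by_contra hne
    exact (h1 r hw).elim (Or.inr (hdev r hne))
  · exact hframe sf' r hw
end

section
/- Graham's online list scheduling of a DAG of tasks on m identical processors: at every moment when a processor is idle and some task has all its predecessors completed, a task is started; then the makespan is at most (2 - 1/m) times the optimal makespan. -/
/-- A schedule of tasks on `m` identical processors: each task gets a start
time and a processor. -/
structure Sched (T : Type*) (m : ℕ) where
  start : T → ℝ
  proc : T → Fin m

/-- The schedule is feasible for the precedence DAG `E` and processing times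
`p`: tasks start at nonnegative times, no task starts before all its
predecessors finish, and each processor runs at most one task at a time. -/
def Feasible {T : Type*} {m : ℕ} (E : T → T → Prop) (p : T → ℝ)
    (S : Sched T m) : Prop :=
  (∀ t, 0 ≤ S.start t) ∧
  (∀ a b, E a b → S.start a + p a ≤ S.start b) ∧
  (∀ a b, a ≠ b → S.proc a = S.proc b →
    S.start a + p a ≤ S.start b ∨ S.start b + p b ≤ S.start a)

/-- Processor `j` is busy at time `x`. -/
def Busy {T : Type*} {m : ℕ} (p : T → ℝ) (S : Sched T m) (j : Fin m) (x : ℝ) : Prop :=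
  ∃ t, S.proc t = j ∧ S.start t ≤ x ∧ x < S.start t + p t

/-- Task `t` is available at time `x`: it has not yet been started, and all of
its predecessors have finished. -/
def Avail {T : Type*} {m : ℕ} (E : T → T → Prop) (p : T → ℝ)
    (S : Sched T m) (t : T) (x : ℝ) : Prop :=
  x < S.start t ∧ ∀ a, E a t → S.start a + p a ≤ x

/-- `S` is a list schedule: at every moment at which some task is available,
every processor is busy (i.e. whenever a processor is idle and a task is
available, some task is immediately started). -/
def IsListSched {T : Type*} {m : ℕ} (E : T → T → Prop) (p : T → ℝ)
    (S : Sched T m) : Prop :=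
  ∀ x : ℝ, 0 ≤ x → (∃ t, Avail E p S t x) → ∀ j : Fin m, Busy p S j x

/-- The makespan of a schedule: the maximum completion time. -/
noncomputable def makespan {T : Type*} [Fintype T] [Nonempty T] {m : ℕ}
    (p : T → ℝ) (S : Sched T m) : ℝ :=
  ⨆ t, (S.start t + p t)

/-!
Let `u` be a task finishing last in the list schedule `S`. Repeatedly passing to the
predecessor that finishes last yields a path `L` of the DAG such that whenever a processor idles
before `u` finishes, some task of `L` is running, so at most `m - 1` processors idle then.
Measuring busy and idle time over `[0, makespan S)` gives
`m · makespan S ≤ ∑ p + (m - 1) · ∑_{k ∈ L} p k`. Any feasible schedule `S'` has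
`∑ p ≤ m · makespan S'` since each processor runs disjoint intervals, and
`∑_{k ∈ L} p k ≤ makespan S'` since the tasks of a path run one after another.
-/

open MeasureTheory

theorem List.sum_toFinset_le_sum_map {ι M : Type*} [DecidableEq ι] [AddCommMonoid M]
    [PartialOrder M] [IsOrderedAddMonoid M] {l : List ι} {f : ι → M} (hf : ∀ x ∈ l, 0 ≤ f x) :
    ∑ x ∈ l.toFinset, f x ≤ (l.map f).sum := by
  rw [Finset.sum_list_map_count]
  refine Finset.sum_le_sum fun x hx => ?_
  have hx' := List.mem_toFinset.1 hx
  simpa using nsmul_le_nsmul_left (hf x hx') (List.count_pos_iff.2 hx')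

section IdleTime

variable {α ι κ : Type*} [MeasurableSpace α] [Fintype κ] (μ : Measure α) (A : Set α)
  (B : κ → Set α) (K : Finset ι) (I : ι → Set α) (c : ι → κ)

-- `B j` is the busy set of processor `j`, and `I k` the run of task `k` on processor `c k`.
theorem sum_measure_diff_le [DecidableEq κ] (hIB : ∀ k ∈ K, I k ⊆ B (c k))
    (hcover : ∀ j, A \ B j ⊆ ⋃ k ∈ K, I k) :
    ∑ j, μ (A \ B j) ≤ (Fintype.card κ - 1 : ℕ) * ∑ k ∈ K, μ (I k) := by
  have hsplit (j : κ) : μ (A \ B j) ≤ ∑ k ∈ K, μ (A \ B j ∩ I k) := by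
    calc μ (A \ B j) = μ (⋃ k ∈ K, A \ B j ∩ I k) := by
          rw [← Set.inter_iUnion₂, Set.inter_eq_left.2 (hcover j)]
      _ ≤ _ := measure_biUnion_finset_le _ _
  have hrun (k : ι) (hk : k ∈ K) :
      ∑ j, μ (A \ B j ∩ I k) ≤ (Fintype.card κ - 1 : ℕ) * μ (I k) := by
    have hown : A \ B (c k) ∩ I k = ∅ := by
      ext x
      simp only [Set.mem_inter_iff, Set.mem_sdiff, Set.mem_empty_iff_false, iff_false]
      exact fun ⟨⟨_, hxB⟩, hxI⟩ => hxB (hIB k hk hxI)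
    rw [← Finset.sum_erase_add _ _ (Finset.mem_univ (c k)), hown, measure_empty, add_zero,
      ← nsmul_eq_mul, ← Finset.card_univ, ← Finset.card_erase_of_mem (Finset.mem_univ (c k))]
    exact Finset.sum_le_card_nsmul _ _ _ fun j _ => measure_mono Set.inter_subset_right
  calc ∑ j, μ (A \ B j) ≤ ∑ j, ∑ k ∈ K, μ (A \ B j ∩ I k) := Finset.sum_le_sum fun j _ => hsplit j
    _ = ∑ k ∈ K, ∑ j, μ (A \ B j ∩ I k) := Finset.sum_comm
    _ ≤ ∑ k ∈ K, (Fintype.card κ - 1 : ℕ) * μ (I k) := Finset.sum_le_sum hrun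
    _ = _ := (Finset.mul_sum _ _ _).symm

theorem card_mul_measure_le [DecidableEq κ] (hB : ∀ j, MeasurableSet (B j))
    (hIB : ∀ k ∈ K, I k ⊆ B (c k)) (hcover : ∀ j, A \ B j ⊆ ⋃ k ∈ K, I k) :
    Fintype.card κ * μ A ≤ ∑ j, μ (B j) + (Fintype.card κ - 1 : ℕ) * ∑ k ∈ K, μ (I k) := by
  calc Fintype.card κ * μ A = ∑ j, (μ (A ∩ B j) + μ (A \ B j)) := by
        simp [measure_inter_add_sdiff _ (hB _)]
    _ = ∑ j, μ (A ∩ B j) + ∑ j, μ (A \ B j) := Finset.sum_add_distrib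
    _ ≤ _ := add_le_add (Finset.sum_le_sum fun j _ => measure_mono Set.inter_subset_right)
        (sum_measure_diff_le μ A B K I c hIB hcover)

end IdleTime

namespace Sched

variable {T : Type*} {m : ℕ} {E : T → T → Prop} {p : T → ℝ} (S : Sched T m)

def interval (p : T → ℝ) (t : T) : Set ℝ :=
  Set.Ico (S.start t) (S.start t + p t)

theorem volume_interval (t : T) : volume (S.interval p t) = ENNReal.ofReal (p t) := by
  simp [interval, Real.volume_Ico]

theorem disjoint_interval (hS : Feasible E p S) {a b : T} (hab : a ≠ b)
    (hproc : S.proc a = S.proc b) : Disjoint (S.interval p a) (S.interval p b) := by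
  rw [Set.disjoint_left]
  rintro x ⟨hax, hxa⟩ ⟨hbx, hxb⟩
  rcases hS.2.2 a b hab hproc with h | h <;> linarith

variable [Fintype T]

def busySet (p : T → ℝ) (j : Fin m) : Set ℝ :=
  ⋃ t ∈ ({t | S.proc t = j} : Finset T), S.interval p t

theorem mem_busySet_iff {j : Fin m} {x : ℝ} : x ∈ S.busySet p j ↔ Busy p S j x := by
  simp [busySet, interval, Busy, and_left_comm]

theorem measurableSet_busySet (j : Fin m) : MeasurableSet (S.busySet p j) :=
  Finset.measurableSet_biUnion _ fun _ _ => measurableSet_Ico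

theorem interval_subset_busySet (t : T) : S.interval p t ⊆ S.busySet p (S.proc t) :=
  Set.subset_biUnion_of_mem (u := S.interval p) (by simp)

theorem volume_busySet_le (j : Fin m) :
    volume (S.busySet p j) ≤ ∑ t with S.proc t = j, ENNReal.ofReal (p t) := by
  simpa only [busySet, volume_interval] using
    measure_biUnion_finset_le (μ := volume) _ (S.interval p)

theorem volume_busySet (hS : Feasible E p S) (j : Fin m) :
    volume (S.busySet p j) = ∑ t with S.proc t = j, ENNReal.ofReal (p t) := by
  refine (measure_biUnion_finset (fun a ha b hb hab => S.disjoint_interval hS hab ?_)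
    fun _ _ => measurableSet_Ico).trans (by simp only [volume_interval])
  simp only [Finset.coe_filter, Finset.mem_univ, true_and, Set.mem_ofPred_eq] at ha hb
  rw [ha, hb]

end Sched

section Makespan

variable {T : Type*} [Fintype T] [Nonempty T] {m : ℕ} {E : T → T → Prop} {p : T → ℝ}
  (S : Sched T m)

theorem le_makespan (p : T → ℝ) (t : T) : S.start t + p t ≤ makespan p S :=
  le_ciSup (Set.finite_range fun t => S.start t + p t).bddAbove t

theorem exists_finish_eq_makespan (p : T → ℝ) : ∃ t, S.start t + p t = makespan p S :=
  exists_eq_ciSup_of_finite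

theorem makespan_nonneg (hp : ∀ t, 0 ≤ p t) (hS : Feasible E p S) : 0 ≤ makespan p S := by
  obtain ⟨t⟩ := ‹Nonempty T›
  linarith [hS.1 t, hp t, le_makespan S p t]

theorem busySet_subset_Ico_makespan (hS : Feasible E p S) (j : Fin m) :
    S.busySet p j ⊆ Set.Ico 0 (makespan p S) := by
  intro x hx
  obtain ⟨t, -, hst, hxt⟩ := S.mem_busySet_iff.1 hx
  exact ⟨(hS.1 t).trans hst, hxt.trans_le (le_makespan S p t)⟩

theorem load_le_makespan (hp : ∀ t, 0 ≤ p t) (hS : Feasible E p S) (j : Fin m) :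
    ∑ t with S.proc t = j, p t ≤ makespan p S := by
  rw [← ENNReal.ofReal_le_ofReal_iff (makespan_nonneg S hp hS),
    ENNReal.ofReal_sum_of_nonneg fun t _ => hp t, ← S.volume_busySet hS,
    ← sub_zero (makespan p S), ← Real.volume_Ico]
  exact measure_mono (busySet_subset_Ico_makespan S hS j)

theorem sum_le_mul_makespan (hp : ∀ t, 0 ≤ p t) (hS : Feasible E p S) :
    ∑ t, p t ≤ m * makespan p S := by
  calc ∑ t, p t = ∑ j : Fin m, ∑ t with S.proc t = j, p t := (Finset.sum_fiberwise _ _ _).symm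
    _ ≤ ∑ _j : Fin m, makespan p S := Finset.sum_le_sum fun j _ => load_le_makespan S hp hS j
    _ = m * makespan p S := by simp

end Makespan

section CriticalChain

variable {T : Type*} {m : ℕ} {E : T → T → Prop} {p : T → ℝ} {S : Sched T m}

theorem Feasible.sum_map_le_of_isChain (hS : Feasible E p S) {L : List T}
    (hL : L.IsChain (fun a b => E b a)) {u : T} (hu : L.head? = some u) :
    (L.map p).sum ≤ S.start u + p u := by
  induction L generalizing u with
  | nil => simp at hu
  | cons a L ih =>
    obtain rfl : a = u := Option.some.inj hu
    rw [List.isChain_cons] at hL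
    cases hL' : L.head? with
    | none => simp [List.head?_eq_none_iff.1 hL', hS.1 a]
    | some b =>
      have hba : S.start b + p b ≤ S.start a := hS.2.1 b a (hL.1 b hL')
      simp only [List.map_cons, List.sum_cons]
      linarith [ih hL.2 hL']

theorem IsListSched.mem_interval_or_exists_pred (hlist : IsListSched E p S) {x : ℝ}
    (hx : 0 ≤ x) (hidle : ∃ j, ¬ Busy p S j x) {u : T} (hxu : x < S.start u + p u) :
    x ∈ S.interval p u ∨ ∃ b, E b u ∧ x < S.start b + p b := by
  by_cases hsu : S.start u ≤ x
  · exact .inl ⟨hsu, hxu⟩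
  · right
    by_contra! hfinished
    obtain ⟨j, hj⟩ := hidle
    exact hj (hlist x hx ⟨u, not_le.1 hsu, hfinished⟩ j)

theorem exists_critical_chain [Finite T] (hp : ∀ t, 0 < p t) (hS : Feasible E p S)
    (hlist : IsListSched E p S) (u : T) :
    ∃ L : List T, L.IsChain (fun a b => E b a) ∧ L.head? = some u ∧
      ∀ x, 0 ≤ x → x < S.start u + p u → (∃ j, ¬ Busy p S j x) →
        ∃ k ∈ L, x ∈ S.interval p k := by
  induction u using
    (Finite.wellFounded_of_trans_of_irrefl fun a b => S.start a < S.start b).induction with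
  | _ u ih =>
  obtain ⟨L, hhead, hchain, hcover⟩ : ∃ L : List T, (∀ a ∈ L.head?, E a u) ∧
      L.IsChain (fun a b => E b a) ∧ ∀ x, 0 ≤ x → (∃ j, ¬ Busy p S j x) →
        (∃ b, E b u ∧ x < S.start b + p b) → ∃ k ∈ L, x ∈ S.interval p k := by
    by_cases hpred : {a | E a u}.Nonempty
    · obtain ⟨a, hau : E a u, hlast⟩ :=
        Set.exists_max_image _ (fun a => S.start a + p a) (Set.toFinite _) hpred
      obtain ⟨L, hL, hhd, hcov⟩ := ih a (by linarith [hp a, hS.2.1 a u hau])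
      refine ⟨L, by simpa [hhd] using hau, hL, fun x hx hidle ⟨b, hbu, hxb⟩ => ?_⟩
      exact hcov x hx (hxb.trans_le (hlast b hbu)) hidle
    · exact ⟨[], by simp, .nil, fun x _ _ ⟨b, hbu, _⟩ => (hpred ⟨b, hbu⟩).elim⟩
  refine ⟨u :: L, List.isChain_cons.2 ⟨hhead, hchain⟩, rfl, fun x hx hxu hidle => ?_⟩
  rcases hlist.mem_interval_or_exists_pred hx hidle hxu with hxu | hpred
  · exact ⟨u, List.mem_cons_self, hxu⟩
  · obtain ⟨k, hk, hxk⟩ := hcover x hx hidle hpred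
    exact ⟨k, List.mem_cons_of_mem _ hk, hxk⟩

end CriticalChain

theorem mul_le_sum_add_mul_sum_of_idle_covered {T : Type*} [Fintype T] {m : ℕ} {p : T → ℝ}
    (S : Sched T m) (hp : ∀ t, 0 ≤ p t) (hm : 0 < m) {M : ℝ} (K : Finset T)
    (hK : ∀ x, 0 ≤ x → x < M → (∃ j, ¬ Busy p S j x) → ∃ k ∈ K, x ∈ S.interval p k) :
    m * M ≤ ∑ t, p t + (m - 1) * ∑ k ∈ K, p k := by
  have hcover (j : Fin m) : Set.Ico 0 M \ S.busySet p j ⊆ ⋃ k ∈ K, S.interval p k := by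
    rintro x ⟨⟨hx, hxM⟩, hxj⟩
    obtain ⟨k, hk, hxk⟩ := hK x hx hxM ⟨j, fun h => hxj (S.mem_busySet_iff.2 h)⟩
    exact Set.mem_biUnion hk hxk
  have hvol := card_mul_measure_le volume (Set.Ico 0 M) (S.busySet p) K (S.interval p) S.proc
    S.measurableSet_busySet (fun k _ => S.interval_subset_busySet k) hcover
  have hwork : 0 ≤ ∑ t, p t := Finset.sum_nonneg fun t _ => hp t
  have hcrit : 0 ≤ ((m - 1 : ℕ) : ℝ) * ∑ k ∈ K, p k :=
    mul_nonneg (Nat.cast_nonneg _) (Finset.sum_nonneg fun k _ => hp k)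
  rw [← Nat.cast_pred hm, ← ENNReal.ofReal_le_ofReal_iff (add_nonneg hwork hcrit)]
  calc ENNReal.ofReal (m * M) = m * volume (Set.Ico 0 M) := by
        simp [Real.volume_Ico, ENNReal.ofReal_mul]
    _ ≤ ∑ j, volume (S.busySet p j) + (m - 1 : ℕ) * ∑ k ∈ K, volume (S.interval p k) := by
        simpa using hvol
    _ ≤ ∑ j, ∑ t with S.proc t = j, ENNReal.ofReal (p t) +
          (m - 1 : ℕ) * ∑ k ∈ K, ENNReal.ofReal (p k) := by
        gcongr with j
        · exact S.volume_busySet_le j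
        · rw [S.volume_interval]
    _ = ENNReal.ofReal (∑ t, p t + (m - 1 : ℕ) * ∑ k ∈ K, p k) := by
        rw [Finset.sum_fiberwise, ENNReal.ofReal_add hwork hcrit,
          ENNReal.ofReal_mul (by positivity), ENNReal.ofReal_natCast,
          ENNReal.ofReal_sum_of_nonneg fun t _ => hp t,
          ENNReal.ofReal_sum_of_nonneg fun k _ => hp k]

/-- Graham's bound for online list scheduling of a DAG on `m` identical
processors: the makespan of any list schedule is at most `(2 - 1/m)` times the
makespan of any feasible schedule, hence at most `(2 - 1/m)` times the optimal
makespan. -/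
theorem graham_list_scheduling {T : Type*} [Fintype T] [Nonempty T] {m : ℕ}
    (hm : 0 < m) (E : T → T → Prop) (p : T → ℝ) (hp : ∀ t, 0 < p t)
    (S : Sched T m) (hS : Feasible E p S) (hlist : IsListSched E p S)
    (S' : Sched T m) (hS' : Feasible E p S') :
    makespan p S ≤ (2 - 1 / (m : ℝ)) * makespan p S' := by
  classical
  have hp₀ : ∀ t, 0 ≤ p t := fun t => (hp t).le
  obtain ⟨u, hu⟩ := exists_finish_eq_makespan S p
  obtain ⟨L, hchain, hhead, hcover⟩ := exists_critical_chain hp hS hlist u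
  have hpath : ∑ k ∈ L.toFinset, p k ≤ makespan p S' :=
    (List.sum_toFinset_le_sum_map fun t _ => hp₀ t).trans
      ((hS'.sum_map_le_of_isChain hchain hhead).trans (le_makespan S' p u))
  have hwork : ∑ t, p t ≤ m * makespan p S' := sum_le_mul_makespan S' hp₀ hS'
  have hidle : m * makespan p S ≤ ∑ t, p t + (m - 1) * ∑ k ∈ L.toFinset, p k :=
    mul_le_sum_add_mul_sum_of_idle_covered S hp₀ hm L.toFinset
      (by simpa only [← hu, List.mem_toFinset] using hcover)
  have hm₁ : (1 : ℝ) ≤ m := Nat.one_le_cast.2 hm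
  rw [show (2 - 1 / (m : ℝ)) * makespan p S' =
      (m * makespan p S' + (m - 1) * makespan p S') / m by field_simp; ring,
    le_div_iff₀ (by positivity)]
  nlinarith [mul_le_mul_of_nonneg_left hpath (sub_nonneg.2 hm₁)]
end
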